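/- arXiv:2402.18090 — 4 statements merged into one kernel-verified Lean document; each statement's English description precedes it below -/
import Mathlib

section
/- For any minimal rare word aub for a string S (with a, b characters and u a string), the middle part u is a maximal repeat in S, i.e., u occurs at least twice in S and is both left-maximal and right-maximal in S. -/
/-- Number of occurrences of `w` as a substring of `S` (for `w = ε` this is `|S| + 1`). -/
def occ {α : Type*} [DecidableEq α] (S w : List α) : ℕ :=
  (List.range (S.length + 1)).countP
    (fun i => decide (i + w.length ≤ S.length ∧ (S.drop i).take w.length = w))

/-- `u` is left-maximal in `S`. -/
def LeftMaximal {α : Type*} (S u : List α) : Prop :=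
  (∃ c d : α, c ≠ d ∧ (c :: u) <:+: S ∧ (d :: u) <:+: S) ∨ u <+: S

/-- `u` is right-maximal in `S`. -/
def RightMaximal {α : Type*} (S u : List α) : Prop :=
  (∃ c d : α, c ≠ d ∧ (u ++ [c]) <:+: S ∧ (u ++ [d]) <:+: S) ∨ u <:+ S

/-- `aub` is a minimal rare word for `S`. -/
def IsMRW {α : Type*} [DecidableEq α] (S : List α) (a : α) (u : List α) (b : α) : Prop :=
  occ S (a :: (u ++ [b])) < occ S (a :: u) ∧ occ S (a :: (u ++ [b])) < occ S (u ++ [b])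

namespace MRWAux

set_option linter.unusedSectionVars false

variable {α : Type*} [DecidableEq α]

/-- occurrence predicate -/
abbrev POcc (S w : List α) (i : ℕ) : Prop :=
  i + w.length ≤ S.length ∧ (S.drop i).take w.length = w

lemma occ_eq (S w : List α) :
    occ S w = ((Finset.range (S.length + 1)).filter (fun i => POcc S w i)).card := by
  rw [occ, List.countP_eq_length_filter]
  rfl

lemma POcc.mem_range {S w : List α} {i : ℕ} (h : POcc S w i) :
    i ∈ Finset.range (S.length + 1) := by
  simp only [Finset.mem_range]
  have := h.1
  omega

lemma POcc.infix {S w : List α} {i : ℕ} (h : POcc S w i) : w <:+: S := by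
  refine ⟨S.take i, S.drop (i + w.length), ?_⟩
  conv_rhs => rw [← List.take_append_drop i S,
    ← List.take_append_drop w.length (S.drop i)]
  rw [h.2, List.drop_drop, List.append_assoc]

lemma POcc_cons {S w : List α} {a : α} {i : ℕ} :
    POcc S (a :: w) i ↔ POcc S w (i + 1) ∧ S[i]? = some a := by
  constructor
  · rintro ⟨hl, ht⟩
    simp only [List.length_cons] at hl
    have hi : i < S.length := by omega
    rw [List.drop_eq_getElem_cons hi, List.length_cons, List.take_succ_cons] at ht
    rw [List.cons.injEq] at ht
    exact ⟨⟨by omega, ht.2⟩, by rw [List.getElem?_eq_getElem hi, ht.1]⟩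
  · rintro ⟨⟨hl, ht⟩, hg⟩
    have hi : i < S.length := (List.getElem?_eq_some_iff.mp hg).1
    refine ⟨by simp only [List.length_cons]; omega, ?_⟩
    rw [List.drop_eq_getElem_cons hi, List.length_cons, List.take_succ_cons, ht]
    have : S[i] = a := by
      have := List.getElem?_eq_getElem hi
      rw [hg] at this
      exact (Option.some.injEq _ _ ▸ this).symm
    rw [this]

lemma POcc_snoc {S w : List α} {b : α} {i : ℕ} :
    POcc S (w ++ [b]) i ↔ POcc S w i ∧ S[i + w.length]? = some b := by
  have hlen : (w ++ [b]).length = w.length + 1 := by simp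
  constructor
  · rintro ⟨hl, ht⟩
    rw [hlen] at hl ht
    rw [List.take_succ, List.getElem?_drop] at ht
    have hilt : i + w.length < S.length := by omega
    rw [List.getElem?_eq_getElem hilt] at ht
    have hlen2 : (List.take w.length (S.drop i)).length = w.length := by
      rw [List.length_take, List.length_drop]
      omega
    have := List.append_inj ht (by simpa using hlen2)
    refine ⟨⟨by omega, this.1⟩, ?_⟩
    rw [List.getElem?_eq_getElem hilt]
    have hb : S[i + w.length] = b := by simpa using this.2
    simp [List.getElem?_eq_getElem hilt, hb]
  · rintro ⟨⟨hl, ht⟩, hg⟩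
    have hilt : i + w.length < S.length := (List.getElem?_eq_some_iff.mp hg).1
    refine ⟨by rw [hlen]; omega, ?_⟩
    rw [hlen, List.take_succ, List.getElem?_drop, hg, ht]
    rfl

end MRWAux

open MRWAux in
theorem mrw_middle_maximal_repeat {α : Type*} [DecidableEq α]
    (S u : List α) (a b : α) (h : IsMRW S a u b) :
    2 ≤ occ S u ∧ LeftMaximal S u ∧ RightMaximal S u := by
  obtain ⟨h1, h2⟩ := h
  rw [occ_eq, occ_eq] at h1
  rw [occ_eq S (a :: (u ++ [b])), occ_eq] at h2
  -- Step 1: an occurrence of a::u not extendable by b on the right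
  have step1 : ∃ i, POcc S (a :: u) i ∧ ¬ POcc S (a :: (u ++ [b])) i := by
    by_contra hc
    push_neg at hc
    have : (Finset.range (S.length + 1)).filter (fun i => POcc S (a :: u) i) ⊆
        (Finset.range (S.length + 1)).filter (fun i => POcc S (a :: (u ++ [b])) i) := by
      intro x hx
      simp only [Finset.mem_filter] at hx ⊢
      exact ⟨hx.1, hc x hx.2⟩
    exact absurd (Finset.card_le_card this) (by omega)
  -- Step 2: an occurrence of u++[b] not preceded by a
  have step2 : ∃ j, POcc S (u ++ [b]) j ∧ (j = 0 ∨ S[j - 1]? ≠ some a) := by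
    by_contra hc
    push_neg at hc
    have hmap : ∀ j ∈ (Finset.range (S.length + 1)).filter (fun i => POcc S (u ++ [b]) i),
        j - 1 ∈ (Finset.range (S.length + 1)).filter (fun i => POcc S (a :: (u ++ [b])) i) := by
      intro j hj
      simp only [Finset.mem_filter] at hj ⊢
      obtain ⟨hj0, hja⟩ := hc j hj.2
      have hP : POcc S (a :: (u ++ [b])) (j - 1) := by
        rw [POcc_cons]
        constructor
        · have : j - 1 + 1 = j := by omega
          rw [this]; exact hj.2
        · exact hja
      exact ⟨hP.mem_range, hP⟩
    have hinj : ∀ j₁ ∈ (Finset.range (S.length + 1)).filter (fun i => POcc S (u ++ [b]) i),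
        ∀ j₂ ∈ (Finset.range (S.length + 1)).filter (fun i => POcc S (u ++ [b]) i),
        j₁ - 1 = j₂ - 1 → j₁ = j₂ := by
      intro j₁ hj₁ j₂ hj₂ he
      simp only [Finset.mem_filter] at hj₁ hj₂
      have h₁ := (hc j₁ hj₁.2).1
      have h₂ := (hc j₂ hj₂.2).1
      omega
    exact absurd (Finset.card_le_card_of_injOn _ hmap hinj) (by omega)
  obtain ⟨i, hi, hinot⟩ := step1
  obtain ⟨j, hj, hjor⟩ := step2
  -- unpack
  have hiu : POcc S u (i + 1) ∧ S[i]? = some a := POcc_cons.mp hi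
  have hju : POcc S u j ∧ S[j + u.length]? = some b := POcc_snoc.mp hj
  -- i+1 ≠ j
  have hne : i + 1 ≠ j := by
    intro he
    rcases hjor with h0 | hna
    · omega
    · apply hna
      have : j - 1 = i := by omega
      rw [this]
      exact hiu.2
  -- 2 ≤ occ S u
  have hocc2 : 2 ≤ occ S u := by
    rw [occ_eq]
    rw [show (2 : ℕ) = 1 + 1 from rfl]
    refine Nat.succ_le_of_lt (Finset.one_lt_card.mpr ?_)
    refine ⟨i + 1, ?_, j, ?_, hne⟩
    · simp only [Finset.mem_filter]
      exact ⟨hiu.1.mem_range, hiu.1⟩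
    · simp only [Finset.mem_filter]
      exact ⟨hju.1.mem_range, hju.1⟩
  refine ⟨hocc2, ?_, ?_⟩
  -- LeftMaximal
  · rcases Nat.eq_zero_or_pos j with hj0 | hjpos
    · right
      subst hj0
      have := hju.1.2
      rw [List.drop_zero] at this
      rw [← this]
      exact List.take_prefix _ _
    · rcases hjor with h0 | hna
      · omega
      left
      have hjlt : j - 1 < S.length := by
        have := hj.1
        simp only [List.length_append, List.length_singleton] at this
        omega
      obtain ⟨c, hc⟩ : ∃ c, S[j-1]? = some c := ⟨S[j-1], List.getElem?_eq_getElem hjlt⟩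
      refine ⟨c, a, ?_, ?_, ?_⟩
      · intro hca
        exact hna (hca ▸ hc)
      · have hP : POcc S (c :: u) (j - 1) := by
          rw [POcc_cons]
          refine ⟨?_, hc⟩
          have : j - 1 + 1 = j := by omega
          rw [this]; exact hju.1
        exact hP.infix
      · exact hi.infix
  -- RightMaximal
  · have hnotsnoc : ¬ (POcc S (a :: u) i ∧ S[i + (a :: u).length]? = some b) := by
      intro hcon
      exact hinot (by
        have : (a :: (u ++ [b])) = (a :: u) ++ [b] := rfl
        rw [this]
        exact POcc_snoc.mpr hcon)
    have hnb : S[i + (a :: u).length]? ≠ some b := fun hb => hnotsnoc ⟨hi, hb⟩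
    rcases hopt : S[i + (a :: u).length]? with _ | c
    · -- end of string: u is a suffix
      right
      have hlen : S.length ≤ i + (a :: u).length := by
        simpa using List.getElem?_eq_none_iff.mp hopt
      have hlen2 : i + (a :: u).length ≤ S.length := hi.1
      have heq : S.length = i + 1 + u.length := by
        simp only [List.length_cons] at hlen hlen2
        omega
      have hdrop : (S.drop (i + 1)).length = u.length := by
        rw [List.length_drop]; omega
      have : S.drop (i + 1) = u := by
        have ht := hiu.1.2
        rw [← hdrop] at ht
        rw [List.take_length] at ht
        exact ht
      rw [← this]
      exact List.drop_suffix _ _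
    · -- extension by c ≠ b
      left
      have hcb : c ≠ b := fun hcb => hnb (hcb ▸ hopt)
      refine ⟨c, b, hcb, ?_, hj.infix⟩
      have hP : POcc S (u ++ [c]) (i + 1) := by
        rw [POcc_snoc]
        refine ⟨hiu.1, ?_⟩
        have : i + 1 + u.length = i + (a :: u).length := by
          simp only [List.length_cons]; omega
        rw [this, hopt]
      exact hP.infix
end

section
/- Let S be a string whose first character ♯ and last character $ each occur exactly once in S. Then every minimal rare word aub for S that occurs at least once in S (occ_S(aub) ≥ 1) is an extended bispecial factor of S; i.e., there exist characters a' ≠ a and b' ≠ b such that a'ub and aub' are substrings of S. -/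
namespace List

variable {α : Type*}

theorem not_prefix_of_cons_infix {S w : List α} {a : α} [DecidableEq α] (hS : S ≠ [])
    (hhead : S.count (S.head hS) = 1) (hw : w ≠ []) (h : a :: w <:+: S) : ¬ w <+: S := by
  obtain ⟨c, w, rfl⟩ := exists_cons_of_ne_nil hw
  rintro hpre
  obtain ⟨T, rfl⟩ : ∃ T, S = c :: T := by
    obtain ⟨r, rfl⟩ := hpre
    exact ⟨w ++ r, rfl⟩
  have hcT : c ∈ T := by
    rcases infix_cons_iff.1 h with hpre' | hinf
    · exact (cons_prefix_cons.1 hpre').2.sublist.subset mem_cons_self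
    · exact hinf.subset (mem_cons_of_mem a mem_cons_self)
  rw [head_cons, count_cons_self] at hhead
  exact absurd (count_pos_iff.2 hcT) (by omega)

theorem not_suffix_of_append_infix {S w : List α} {b : α} [DecidableEq α] (hS : S ≠ [])
    (hlast : S.count (S.getLast hS) = 1) (hw : w ≠ []) (h : w ++ [b] <:+: S) : ¬ w <:+ S := by
  have hSr : S.reverse ≠ [] := reverse_ne_nil_iff.2 hS
  rw [← reverse_prefix]
  refine not_prefix_of_cons_infix (a := b) hSr ?_ (reverse_ne_nil_iff.2 hw) ?_
  · rwa [head_reverse, count_reverse]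
  · simpa using reverse_infix.2 h

end List

section Occurrences

variable {α : Type*} [DecidableEq α]

def occurrences (S w : List α) : Finset ℕ :=
  {i ∈ Finset.range (S.length + 1) | w <+: S.drop i}

theorem mem_occurrences {S w : List α} {i : ℕ} :
    i ∈ occurrences S w ↔ i ≤ S.length ∧ w <+: S.drop i := by
  simp [occurrences]

theorem occ_eq_card_occurrences (S w : List α) : occ S w = (occurrences S w).card := by
  rw [occ, List.countP_eq_length_filter]
  show _ = (List.filter _ (List.range _)).length
  congr 1
  refine List.filter_congr fun i hi => ?_
  rw [List.mem_range] at hi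
  simp only [decide_eq_decide, List.prefix_iff_eq_take (l₁ := w), eq_comm (a := w)]
  refine and_iff_right_of_imp fun h => ?_
  have := congrArg List.length h
  simp only [List.length_take, List.length_drop] at this
  omega

theorem infix_of_mem_occurrences {S w : List α} {i : ℕ} (h : i ∈ occurrences S w) : w <:+: S :=
  (mem_occurrences.1 h).2.isInfix.trans (S.drop_suffix i).isInfix

theorem infix_of_occ_pos {S w : List α} (h : 0 < occ S w) : w <:+: S := by
  rw [occ_eq_card_occurrences] at h
  obtain ⟨i, hi⟩ := Finset.card_pos.1 h
  exact infix_of_mem_occurrences hi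

theorem prefix_or_exists_ne_cons_infix_of_occ_cons_lt {S w : List α} {a : α}
    (h : occ S (a :: w) < occ S w) : w <+: S ∨ ∃ c, c ≠ a ∧ c :: w <:+: S := by
  rw [occ_eq_card_occurrences, occ_eq_card_occurrences] at h
  obtain ⟨i, hi, hi_fresh⟩ := Finset.exists_mem_notMem_of_card_lt_card
    ((Finset.card_image_le (f := (· + 1))).trans_lt h)
  rcases i with _ | k
  · exact .inl (by simpa using (mem_occurrences.1 hi).2)
  · obtain ⟨hk_le, hpre⟩ := mem_occurrences.1 hi
    have hk : k < S.length := by omega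
    have hocc : ∀ c, S[k] = c → k ∈ occurrences S (c :: w) := fun c hc =>
      mem_occurrences.2 ⟨hk.le, by rwa [List.drop_eq_getElem_cons hk, hc, List.prefix_cons_inj]⟩
    exact .inr ⟨S[k], fun ha => hi_fresh (Finset.mem_image.2 ⟨k, hocc a ha, rfl⟩),
      infix_of_mem_occurrences (hocc _ rfl)⟩

theorem suffix_or_exists_ne_append_infix_of_occ_append_lt {S w : List α} {b : α}
    (h : occ S (w ++ [b]) < occ S w) : w <:+ S ∨ ∃ c, c ≠ b ∧ w ++ [c] <:+: S := by
  rw [occ_eq_card_occurrences, occ_eq_card_occurrences] at h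
  obtain ⟨i, hi, hi_fresh⟩ := Finset.exists_mem_notMem_of_card_lt_card h
  obtain ⟨hi_le, r, hr⟩ := mem_occurrences.1 hi
  rcases r with _ | ⟨c, r⟩
  · rw [List.append_nil] at hr
    exact .inl (hr ▸ S.drop_suffix i)
  · have hocc : i ∈ occurrences S (w ++ [c]) :=
      mem_occurrences.2 ⟨hi_le, r, by rw [← hr]; simp⟩
    exact .inr ⟨c, fun hc => hi_fresh (hc ▸ hocc), infix_of_mem_occurrences hocc⟩

end Occurrences

theorem mrw_occurring_is_ebf {α : Type*} [DecidableEq α]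
    (S u : List α) (a b : α) (hS : S ≠ [])
    (hfirst : S.count (S.head hS) = 1)
    (hlast : S.count (S.getLast hS) = 1)
    (hau : occ S (a :: (u ++ [b])) < occ S (a :: u))
    (hub : occ S (a :: (u ++ [b])) < occ S (u ++ [b]))
    (hocc : 1 ≤ occ S (a :: (u ++ [b]))) :
    (∃ a' : α, a' ≠ a ∧ (a' :: (u ++ [b])) <:+: S) ∧
    (∃ b' : α, b' ≠ b ∧ (a :: (u ++ [b'])) <:+: S) := by
  have haub : a :: (u ++ [b]) <:+: S := infix_of_occ_pos hocc
  constructor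
  · refine (prefix_or_exists_ne_cons_infix_of_occ_cons_lt hub).resolve_left ?_
    exact List.not_prefix_of_cons_infix hS hfirst (by simp) haub
  · refine (suffix_or_exists_ne_append_infix_of_occ_append_lt (w := a :: u) hau).resolve_left ?_
    exact List.not_suffix_of_append_infix hS hlast (by simp) haub
end

section
/- Let S be a string. If w₁ = a₁u₁b and w₂ = a₂u₂b are two distinct minimal rare words for S that both occur in S (occ ≥ 1), end with the same character b, and a₁u₁ and a₂u₂ are right-extensions to the same maximal position in the sense that a₁u₁ is a suffix of a₂u₂, then occ_S(w₁) ≠ occ_S(w₂) or w₂ is not an MRW — i.e., it is impossible that w₁ is a proper suffix of w₂ with occ_S(w₁) = occ_S(w₂) and both w₁, w₂ MRWs occurring in S. -/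
/-!
Since `w₁ ≠ w₂`, the suffix `w₁` of `w₂ = a₂u₂b` is already a suffix of `u₂b`. Every occurrence
of `u₂b` ends with an occurrence of `w₁`, so `occ(w₁) ≥ occ(u₂b) > occ(w₂)` by minimality of `w₂`.
-/

lemma occ_eq_card_filter {α : Type*} [DecidableEq α] (S w : List α) :
    occ S w = ((Finset.range (S.length + 1)).filter
      (fun i => i + w.length ≤ S.length ∧ (S.drop i).take w.length = w)).card := by
  simp [occ, Finset.filter, Finset.range, Multiset.filter, Multiset.range,
    List.countP_eq_length_filter]

/-- An occurrence of `t ++ x` at position `i` is an occurrence of `x` at `i + |t|`. -/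
lemma occ_le_occ_of_isSuffix {α : Type*} [DecidableEq α] (S : List α) {x y : List α}
    (h : x <:+ y) : occ S y ≤ occ S x := by
  obtain ⟨t, rfl⟩ := h
  rw [occ_eq_card_filter, occ_eq_card_filter]
  refine Finset.card_le_card_of_injOn (· + t.length) ?_ (fun i _ j _ hij => by simpa using hij)
  intro i hi
  simp only [Finset.coe_filter, Finset.mem_range, Set.mem_ofPred_eq, List.length_append] at hi ⊢
  obtain ⟨-, hle, htake⟩ := hi
  refine ⟨by omega, by omega, ?_⟩
  have hx : ((S.drop i).take (t.length + x.length)).drop t.length = x := by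
    rw [htake, List.drop_left]
  rwa [List.drop_take, List.drop_drop, Nat.add_sub_cancel_left] at hx

theorem no_proper_suffix_mrw_same_occ_general {α : Type*} [DecidableEq α]
    (S : List α) (a₁ a₂ b : α) (u₁ u₂ : List α)
    (h₂ : IsMRW S a₂ u₂ b)
    (heq : occ S (a₁ :: (u₁ ++ [b])) = occ S (a₂ :: (u₂ ++ [b])))
    (hsuf : (a₁ :: (u₁ ++ [b])) <:+ (a₂ :: (u₂ ++ [b])))
    (hne : (a₁ :: (u₁ ++ [b])) ≠ (a₂ :: (u₂ ++ [b]))) :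
    False := by
  have hsuf' : (a₁ :: (u₁ ++ [b])) <:+ (u₂ ++ [b]) :=
    (List.suffix_cons_iff.mp hsuf).resolve_left hne
  have hle := occ_le_occ_of_isSuffix S hsuf'
  have hlt := h₂.2
  omega

theorem no_proper_suffix_mrw_same_occ {α : Type*} [DecidableEq α]
    (S : List α) (a₁ a₂ b : α) (u₁ u₂ : List α)
    (h₁ : IsMRW S a₁ u₁ b) (h₂ : IsMRW S a₂ u₂ b)
    (hocc₁ : 1 ≤ occ S (a₁ :: (u₁ ++ [b])))
    (heq : occ S (a₁ :: (u₁ ++ [b])) = occ S (a₂ :: (u₂ ++ [b])))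
    (hsuf : (a₁ :: (u₁ ++ [b])) <:+ (a₂ :: (u₂ ++ [b])))
    (hne : (a₁ :: (u₁ ++ [b])) ≠ (a₂ :: (u₂ ++ [b]))) :
    False :=
  no_proper_suffix_mrw_same_occ_general S a₁ a₂ b u₁ u₂ h₂ heq hsuf hne
end

section
/- For the de Bruijn sequence B over an alphabet of size σ ≥ 2 of order k ≥ 1 (a string of length σ^k + k − 1 containing every string of length k exactly once as a substring), every string of length k+1 that does not occur in B is a minimal absent word for B; hence B has at least σ^{k+1} − (σ^k + k − 2) minimal absent words. -/
lemma occ_one_infix {α : Type*} [DecidableEq α] {B u : List α}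
    (h : occ B u = 1) : u <:+: B := by
  have hpos : 0 < occ B u := by omega
  unfold occ at hpos
  obtain ⟨i, hi, hdec⟩ := List.countP_pos_iff.mp hpos
  have hc := of_decide_eq_true hdec
  have hpre : u <+: B.drop i := hc.2 ▸ List.take_prefix _ _
  exact hpre.isInfix.trans (List.drop_suffix i B).isInfix

theorem deBruijn_maws {α : Type*} [Fintype α] [DecidableEq α]
    (σ k : ℕ) (hσ : 2 ≤ σ) (hk : 1 ≤ k) (hcard : Fintype.card α = σ)
    (B : List α) (hlen : B.length = σ ^ k + k - 1)
    (hdeBruijn : ∀ w : List α, w.length = k → occ B w = 1) :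
    (∀ w : List α, w.length = k + 1 → ¬ w <:+: B →
      (w.dropLast <:+: B ∧ w.tail <:+: B)) ∧
    σ ^ (k + 1) - (σ ^ k + k - 2) ≤
      {w : List α | w.length = k + 1 ∧ ¬ w <:+: B}.ncard := by
  have hσk : 2 ≤ σ ^ k := by
    calc 2 ≤ σ := hσ
    _ = σ ^ 1 := (pow_one σ).symm
    _ ≤ σ ^ k := Nat.pow_le_pow_right (by omega) hk
  constructor
  · intro w hw _
    refine ⟨occ_one_infix (hdeBruijn _ ?_), occ_one_infix (hdeBruijn _ ?_)⟩
    · simp [List.length_dropLast, hw]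
    · simp [List.length_tail, hw]
  · set A : Set (List α) := {w : List α | w.length = k + 1} with hA
    set I : Set (List α) := {w : List α | w.length = k + 1 ∧ w <:+: B} with hI
    have e : ↥A ≃ List.Vector α (k + 1) :=
      ⟨fun w => ⟨w.1, w.2⟩, fun v => ⟨v.1, v.2⟩, fun _ => rfl, fun _ => rfl⟩
    have hAfin : A.Finite := by
      have : Finite ↥A := Finite.of_equiv _ e.symm
      exact Set.toFinite A
    have hncA : A.ncard = σ ^ (k + 1) := by
      rw [← Nat.card_coe_set_eq, Nat.card_congr e, Nat.card_eq_fintype_card,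
        card_vector, hcard]
    set F : ℕ → List α := fun i => (B.drop i).take (k + 1) with hF
    have hIsub : I ⊆ ↑((Finset.range (σ ^ k - 1)).image F) := by
      rintro w ⟨hwlen, s, t, hst⟩
      have hlens : s.length + (w.length + t.length) = B.length := by
        have := congrArg List.length hst; simpa using this
      have hFw : F s.length = w := by
        have hd : B.drop s.length = w ++ t := by
          rw [← hst, List.append_assoc, List.drop_left]
        rw [hF]
        simp only [hd, ← hwlen, List.take_left]
      refine Finset.mem_coe.mpr (Finset.mem_image.mpr ⟨s.length, Finset.mem_range.mpr ?_, hFw⟩)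
      omega
    have hncI : I.ncard ≤ σ ^ k - 1 := by
      calc I.ncard ≤ (((Finset.range (σ ^ k - 1)).image F : Finset (List α)) : Set (List α)).ncard :=
            Set.ncard_le_ncard hIsub (Finset.finite_toSet _)
        _ = ((Finset.range (σ ^ k - 1)).image F).card := Set.ncard_coe_finset _
        _ ≤ σ ^ k - 1 := le_trans Finset.card_image_le (by simp)
    have hT : {w : List α | w.length = k + 1 ∧ ¬ w <:+: B} = A \ I := by
      ext w
      simp only [hA, hI, Set.mem_setOf_eq, Set.mem_diff]
      tauto
    have hIA : I ⊆ A := fun w hw => hw.1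
    rw [hT, Set.ncard_diff hIA (hAfin.subset hIA), hncA]
    omega
end
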